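/- arXiv:2603.20585 — 3 statements merged into one kernel-verified Lean document; each statement's English description precedes it below -/
import Mathlib

section
/- Let p ≥ d. For a real p×d matrix A of rank d, for each i ∈ {1,…,d} let Sᵢ(A) denote the null space of A₋ᵢᵀ, and define the admissible projection set 𝒯(A) = ⋃ᵢ₌₁ᵈ { t ∈ Sᵢ(A) : aᵢᵀ t ≠ 0 }, where aᵢ is the i-th column of A. Let 𝒜̄ denote the set of full-column-rank matrices A ∈ ℝ^{p×d} for which there exists NO choice of vectors t⁽¹⁾, …, t⁽ᵖ⁾ ∈ 𝒯(A) such that the p×p matrix T₂, whose k-th row is the transpose of the entrywise (Hadamard) square t⁽ᵏ⁾ ⊙ t⁽ᵏ⁾, has rank p. Then 𝒜̄ has Lebesgue measure zero in ℝ^{p×d}. -/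
/-!
If the top `d × d` block `B` of `A` is invertible, take `t⁽ᵏ⁾` for `k ≤ d` to be the `k`-th row
of `B⁻¹` padded by zeros, so that `Aᵀ t⁽ᵏ⁾ = eₖ`, and for `k > d` take
`t⁽ᵏ⁾ = eₖ + (row i₀ of B⁻¹) - ∑ⱼ A_{kj} (row j of B⁻¹)`, so that `Aᵀ t⁽ᵏ⁾ = e_{i₀}`.
Then `T₂` is block lower triangular with diagonal blocks `B⁻¹ ⊙ B⁻¹` and `1`. Hence suitable
`t⁽ᵏ⁾` exist as soon as `det B · det (adj B ⊙ adj B) ≠ 0`, a polynomial condition in the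
entries of `A` that holds at `A = (1; 0)`, and the zero set of a nonzero polynomial is
Lebesgue-null (induction on the number of variables and Fubini).
-/

open Matrix MeasureTheory MvPolynomial

theorem ContinuousLinearEquiv.measure_preimage_eq_zero {E F : Type*}
    [NormedAddCommGroup E] [NormedSpace ℝ E] [MeasurableSpace E] [BorelSpace E]
    [FiniteDimensional ℝ E] [NormedAddCommGroup F] [NormedSpace ℝ F] [MeasurableSpace F]
    [BorelSpace F] [FiniteDimensional ℝ F] (L : E ≃L[ℝ] F) (μ : Measure E) [μ.IsAddHaarMeasure]
    (ν : Measure F) [ν.IsAddHaarMeasure] {s : Set F} (hs : ν s = 0) : μ (L ⁻¹' s) = 0 := by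
  refine Measure.absolutelyContinuous_isAddHaarMeasure μ (ν.map L.symm) ?_
  rw [show ν.map L.symm = ν.map L.symm.toHomeomorph.toMeasurableEquiv from rfl,
    MeasurableEquiv.map_apply]
  simpa [Set.preimage_preimage] using hs

namespace MvPolynomial

theorem volume_setOf_eval_eq_zero_of_fin {n : ℕ} {f : MvPolynomial (Fin n) ℝ} (hf : f ≠ 0) :
    volume {x | eval x f = 0} = 0 := by
  induction n with
  | zero =>
    obtain ⟨c, rfl⟩ := C_surjective (Fin 0) f
    have hc : c ≠ 0 := by simpa using hf
    simp [hc]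
  | succ n ih =>
    -- Fubini over the first variable: off the null set where the leading coefficient in that
    -- variable vanishes, each fibre is a finite set of roots.
    set q := finSuccEquiv ℝ n f
    have hfinite : ∀ s, eval s q.leadingCoeff ≠ 0 →
        {y : ℝ | eval (Fin.cons y s) f = 0}.Finite := by
      intro s hs
      have hq : q.map (eval s) ≠ 0 := fun h => hs <| by
        simpa using congr_arg (Polynomial.coeff · q.natDegree) h
      simpa [eval_eq_eval_mv_eval', Polynomial.IsRoot] using Polynomial.finite_setOfPred_isRoot hq
    let Φ := Prod.swap ∘ MeasurableEquiv.piFinSuccAbove (fun _ : Fin (n + 1) => ℝ) 0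
    have hΦ : MeasurePreserving Φ volume (volume.prod volume) :=
      Measure.measurePreserving_swap.comp
        (volume_preserving_piFinSuccAbove (fun _ : Fin (n + 1) => ℝ) 0)
    have hmeas : MeasurableSet {z : (Fin n → ℝ) × ℝ | eval (Fin.cons z.2 z.1) f = 0} :=
      (isClosed_eq ((continuous_eval f).comp (continuous_snd.finCons continuous_fst))
        continuous_const).measurableSet
    have hpre : {x | eval x f = 0} = Φ ⁻¹' {z | eval (Fin.cons z.2 z.1) f = 0} := by
      ext x
      simp [Φ]
    rw [hpre, hΦ.measure_preimage hmeas.nullMeasurableSet, Measure.measure_prod_null hmeas]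
    have hlead : q.leadingCoeff ≠ 0 :=
      Polynomial.leadingCoeff_ne_zero.mpr (by simpa [q] using hf)
    filter_upwards [measure_eq_zero_iff_ae_notMem.mp (ih hlead)] with s hs
    exact (hfinite s hs).measure_zero volume

theorem volume_setOf_eval_eq_zero {σ : Type*} [Fintype σ] {f : MvPolynomial σ ℝ} (hf : f ≠ 0) :
    volume {x : σ → ℝ | eval x f = 0} = 0 := by
  let e := Fintype.equivFin σ
  let L : (σ → ℝ) ≃L[ℝ] (Fin _ → ℝ) :=
    (LinearEquiv.funCongrLeft ℝ ℝ e.symm).toContinuousLinearEquiv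
  have hrename : rename e f ≠ 0 := (rename_injective e e.injective).ne_iff.mpr (by simpa using hf)
  convert L.measure_preimage_eq_zero volume volume (volume_setOf_eval_eq_zero_of_fin hrename)
  ext x
  simp [L, eval_rename, LinearMap.funLeft, Function.comp_def]

theorem volume_setOf_eval_uncurry_eq_zero {m n : Type*} [Fintype m] [Fintype n]
    {f : MvPolynomial (m × n) ℝ} (hf : f ≠ 0) :
    volume {M : m → n → ℝ | eval (Function.uncurry M) f = 0} = 0 :=
  let L : (m → n → ℝ) ≃L[ℝ] (m × n → ℝ) :=
    LinearEquiv.toContinuousLinearEquiv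
      { (Equiv.curry m n ℝ).symm with map_add' := fun _ _ => rfl, map_smul' := fun _ _ => rfl }
  L.measure_preimage_eq_zero volume volume (volume_setOf_eval_eq_zero hf)

end MvPolynomial

namespace Matrix

section Admissible

variable {R m n : Type*} [Fintype m]

def admissibleProjections [NonUnitalNonAssocSemiring R] (A : Matrix m n R) : Set (m → R) :=
  ⋃ i, {t | (A.submatrix id (fun j : {j // j ≠ i} => (j : n)))ᵀ *ᵥ t = 0 ∧
    (fun r => A r i) ⬝ᵥ t ≠ 0}

theorem mem_admissibleProjections_of_vecMul_eq_single [CommSemiring R] [Nontrivial R]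
    [DecidableEq n] {A : Matrix m n R} {t : m → R} {i : n} (h : t ᵥ* A = Pi.single i 1) :
    t ∈ A.admissibleProjections := by
  refine Set.mem_iUnion.mpr ⟨i, ?_, ?_⟩
  · rw [mulVec_transpose]
    funext j
    exact (congr_fun h j).trans (Pi.single_eq_of_ne j.2 _)
  · rw [dotProduct_comm]
    exact (congr_fun h i).trans_ne (by simp)

end Admissible

variable {K R S m n o : Type*} [Fintype n] [DecidableEq n]

/-- A polynomial in the entries of `B` whose nonvanishing makes both `B` and `B⁻¹ ⊙ B⁻¹`
invertible. -/
def detMulDetHadamardAdjugate [CommRing R] (B : Matrix n n R) : R :=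
  B.det * (B.adjugate ⊙ B.adjugate).det

theorem _root_.RingHom.map_detMulDetHadamardAdjugate [CommRing R] [CommRing S] (f : R →+* S)
    (B : Matrix n n R) :
    f B.detMulDetHadamardAdjugate = (f.mapMatrix B).detMulDetHadamardAdjugate := by
  have hadamard : f.mapMatrix (B.adjugate ⊙ B.adjugate) =
      f.mapMatrix B.adjugate ⊙ f.mapMatrix B.adjugate := by
    ext; simp
  rw [detMulDetHadamardAdjugate, detMulDetHadamardAdjugate, map_mul, RingHom.map_det,
    RingHom.map_det, hadamard, RingHom.map_adjugate]

@[simp]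
theorem detMulDetHadamardAdjugate_one [CommRing R] :
    (1 : Matrix n n R).detMulDetHadamardAdjugate = 1 := by
  simp [detMulDetHadamardAdjugate, one_hadamard]

theorem det_inv_hadamard_inv [Field K] (B : Matrix n n K) :
    (B⁻¹ ⊙ B⁻¹).det = B.det⁻¹ ^ (2 * Fintype.card n) * (B.adjugate ⊙ B.adjugate).det := by
  rw [inv_def, Ring.inverse_eq_inv', smul_hadamard, hadamard_smul, smul_smul, det_smul, ← sq,
    ← pow_mul]

theorem isUnit_det_and_det_inv_hadamard_inv_ne_zero [Field K] {B : Matrix n n K}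
    (hB : B.detMulDetHadamardAdjugate ≠ 0) : IsUnit B.det ∧ (B⁻¹ ⊙ B⁻¹).det ≠ 0 := by
  obtain ⟨hdet, hadj⟩ := mul_ne_zero_iff.mp hB
  refine ⟨hdet.isUnit, ?_⟩
  rw [det_inv_hadamard_inv]
  exact mul_ne_zero (pow_ne_zero _ (inv_ne_zero hdet)) hadj

variable [Fintype o] [DecidableEq o] [Field K]

theorem exists_mul_fromRows_eq_single_and_det_hadamard (B : Matrix n n K) (D : Matrix o n K)
    (hB : IsUnit B.det) (i₀ : n) :
    ∃ T : Matrix (n ⊕ o) (n ⊕ o) K, (∀ k, ∃ i, (T * fromRows B D) k = Pi.single i 1) ∧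
      (T ⊙ T).det = (B⁻¹ ⊙ B⁻¹).det := by
  let E : Matrix o n K := of fun _ => Pi.single i₀ 1
  let T : Matrix (n ⊕ o) (n ⊕ o) K := fromBlocks B⁻¹ 0 ((E - D) * B⁻¹) 1
  have hmul : T * fromRows B D = fromRows 1 E := by
    rw [fromBlocks_mul_fromRows, Matrix.mul_assoc, nonsing_inv_mul _ hB]
    simp
  refine ⟨T, fun k => ?_, ?_⟩
  · rcases k with i | k
    · exact ⟨i, by ext j; rw [hmul]; exact one_eq_pi_single⟩
    · exact ⟨i₀, by rw [hmul]; rfl⟩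
  · have hblocks : T ⊙ T = fromBlocks (B⁻¹ ⊙ B⁻¹) 0 (((E - D) * B⁻¹) ⊙ ((E - D) * B⁻¹)) 1 := by
      ext (i | i) (j | j) <;> simp [T, one_apply]
    rw [hblocks, det_fromBlocks_zero₁₂, det_one, mul_one]

variable [Fintype m] [DecidableEq m]

theorem exists_rows_vecMul_eq_single_and_rank_hadamard [Nonempty n] (e : n ⊕ o ≃ m)
    (M : Matrix m n K) (hM : (M.submatrix (e ∘ Sum.inl) id).detMulDetHadamardAdjugate ≠ 0) :
    ∃ T : Matrix m m K, (∀ k, ∃ i, T k ᵥ* M = Pi.single i 1) ∧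
      (T ⊙ T).rank = Fintype.card m := by
  obtain ⟨hB, hsq⟩ := isUnit_det_and_det_inv_hadamard_inv_ne_zero hM
  obtain ⟨T, hrows, hdet⟩ := exists_mul_fromRows_eq_single_and_det_hadamard
    (M.submatrix (e ∘ Sum.inl) id) (M.submatrix (e ∘ Sum.inr) id) hB (Classical.arbitrary n)
  have hblocks : fromRows (M.submatrix (e ∘ Sum.inl) id) (M.submatrix (e ∘ Sum.inr) id) =
      M.submatrix e id := by
    ext (i | i) j <;> rfl
  refine ⟨T.submatrix e.symm e.symm, fun k => ?_, ?_⟩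
  · obtain ⟨i, hi⟩ := hrows (e.symm k)
    rw [hblocks, mul_apply_eq_vecMul, submatrix_vecMul_equiv] at hi
    exact ⟨i, hi⟩
  · rw [← submatrix_hadamard]
    refine rank_of_isUnit _ ((isUnit_iff_isUnit_det _).mpr ?_)
    rw [det_submatrix_equiv_self, hdet]
    exact hsq.isUnit

end Matrix

namespace MvPolynomial

variable {R m n : Type*} [CommRing R] [Fintype n] [DecidableEq n]

theorem eval_detMulDetHadamardAdjugate_X (g : n → m) (x : m × n → R) :
    eval x (detMulDetHadamardAdjugate (of fun i j => (X (g i, j) : MvPolynomial (m × n) R))) =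
      (of fun i j => x (g i, j)).detMulDetHadamardAdjugate := by
  rw [RingHom.map_detMulDetHadamardAdjugate]
  congr
  ext i j
  simp

theorem detMulDetHadamardAdjugate_X_ne_zero [Nontrivial R] {g : n → m} (hg : g.Injective) :
    detMulDetHadamardAdjugate (of fun i j => (X (g i, j) : MvPolynomial (m × n) R)) ≠ 0 := by
  classical
  intro h
  have hone : (of fun i j => if g i = g j then (1 : R) else 0) = 1 := by
    ext i j
    simp [one_apply, hg.eq_iff]
  simpa [eval_detMulDetHadamardAdjugate_X, hone] using
    congr_arg (eval fun q : m × n => if q.1 = g q.2 then (1 : R) else 0) h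

end MvPolynomial

/-- The set of full-column-rank matrices `A ∈ ℝ^{p×d}` (`1 ≤ d ≤ p`),
identified with elements of `ℝ^{p·d}`, for which no choice of `p` projection vectors
`t⁽¹⁾, …, t⁽ᵖ⁾` from the admissible projection set
`𝒯(A) = ⋃ᵢ { t : A₋ᵢᵀ t = 0, aᵢᵀ t ≠ 0 }` makes the matrix of Hadamard squares
`T₂ = [t⁽ᵏ⁾ ⊙ t⁽ᵏ⁾]ₖ` have full rank `p`, is Lebesgue-null. -/
theorem bad_measurement_matrices_null (p d : ℕ) (hd : 0 < d) (hpd : d ≤ p) :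
    volume {M : Fin p → Fin d → ℝ |
      (Matrix.of M).rank = d ∧
      ¬ ∃ t : Fin p → Fin p → ℝ,
          (∀ k : Fin p, ∃ i : Fin d,
            ((Matrix.of M).submatrix id
                (fun j : {j : Fin d // j ≠ i} => (j : Fin d)))ᵀ.mulVec (t k) = 0 ∧
            (fun r => Matrix.of M r i) ⬝ᵥ (t k) ≠ 0) ∧
          (Matrix.of fun k r : Fin p => (t k r) ^ 2).rank = p} = 0 := by
  have : Nonempty (Fin d) := Fin.pos_iff_nonempty.mp hd
  let e : Fin d ⊕ Fin (p - d) ≃ Fin p := finSumFinEquiv.trans (finCongr (Nat.add_sub_cancel' hpd))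
  refine measure_mono_null (fun M ⟨_, hbad⟩ => ?_)
    (volume_setOf_eval_uncurry_eq_zero (detMulDetHadamardAdjugate_X_ne_zero
      (e.injective.comp Sum.inl_injective)))
  by_contra hP
  rw [Set.mem_ofPred_eq, eval_detMulDetHadamardAdjugate_X] at hP
  obtain ⟨T, hrows, hrank⟩ := exists_rows_vecMul_eq_single_and_rank_hadamard e (of M) hP
  refine hbad ⟨T, fun k => ?_, ?_⟩
  · obtain ⟨i, hi⟩ := hrows k
    exact Set.mem_iUnion.mp (mem_admissibleProjections_of_vecMul_eq_single hi)
  · rw [show (of fun k r => T k r ^ 2) = T ⊙ T from of.injective (funext₂ fun _ _ => sq _),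
      hrank, Fintype.card_fin]
end

section
/- Let p ≥ d and let A₀ ∈ ℝ^{p×d} be the matrix whose top d×d block is the identity matrix I_d and whose remaining (p−d)×d block is zero, so that the i-th column of A₀ is the standard basis vector eᵢ of ℝᵖ for i = 1,…,d. Define t⁽ⁱ⁾ = eᵢ for i = 1,…,d and t⁽ⁱ⁾ = e₁ + eᵢ for i = d+1,…,p. Then: (a) A₀ has rank d; (b) each t⁽ⁱ⁾ belongs to the admissible projection set 𝒯(A₀) = ⋃ⱼ₌₁ᵈ { t ∈ ℝᵖ : (A₀)₋ⱼᵀ t = 0 and (a₀)ⱼᵀ t ≠ 0 }; and (c) the p×p matrix T₂ whose k-th row is the transpose of the Hadamard square t⁽ᵏ⁾ ⊙ t⁽ᵏ⁾ has rank p. -/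
open Matrix

/-- For `1 ≤ d ≤ p`, the matrix `A₀ ∈ ℝ^{p×d}` with `I_d` on top and zeros
below (columns `(a₀)ᵢ = eᵢ`) has rank `d`; the vectors `t⁽ⁱ⁾ = eᵢ` (`i ≤ d`) and
`t⁽ⁱ⁾ = e₁ + eᵢ` (`d < i ≤ p`) all lie in the admissible projection set `𝒯(A₀)`, and the
`p × p` matrix `T₂` of their Hadamard squares has full rank `p`. -/
theorem identity_top_block_admissible (p d : ℕ) (hd : 0 < d) (hpd : d ≤ p)
    (A₀ : Matrix (Fin p) (Fin d) ℝ)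
    (hA₀ : ∀ r c, A₀ r c = if (r : ℕ) = (c : ℕ) then 1 else 0)
    (t : Fin p → Fin p → ℝ)
    (ht : ∀ k r, t k r =
      if (k : ℕ) < d then (if r = k then 1 else 0)
      else (if (r : ℕ) = 0 ∨ r = k then 1 else 0)) :
    A₀.rank = d ∧
    (∀ k : Fin p, ∃ i : Fin d,
      (A₀.submatrix id (fun j : {j : Fin d // j ≠ i} => (j : Fin d)))ᵀ.mulVec (t k) = 0 ∧
      (fun r => A₀ r i) ⬝ᵥ (t k) ≠ 0) ∧
    (Matrix.of fun k r : Fin p => (t k r) ^ 2).rank = p := by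
  have hcast : ∀ (i : Fin d) (r : Fin p), ((r : ℕ) = (i : ℕ)) ↔ r = Fin.castLE hpd i := by
    intro i r; rw [Fin.ext_iff]; simp
  refine ⟨?_, ?_, ?_⟩
  · apply le_antisymm
    · simpa using A₀.rank_le_card_width
    · have h1 : A₀ᵀ * A₀ = 1 := by
        ext i j
        simp only [Matrix.mul_apply, Matrix.transpose_apply, hA₀]
        rw [Finset.sum_congr rfl (fun r _ => by
          rw [if_congr (hcast i r) rfl rfl, if_congr (hcast j r) rfl rfl])]
        simp only [ite_mul, one_mul, zero_mul, Finset.sum_ite_eq', Finset.mem_univ, if_true]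
        by_cases h : i = j
        · simp [h, Matrix.one_apply]
        · have h2 : Fin.castLE hpd j ≠ Fin.castLE hpd i := by
            simp only [ne_eq, Fin.ext_iff, Fin.coe_castLE]
            exact fun hh => h (Fin.ext hh.symm)
          simp [Matrix.one_apply, h, h2]
      calc (d : ℕ) = (1 : Matrix (Fin d) (Fin d) ℝ).rank := by simp
        _ = (A₀ᵀ * A₀).rank := by rw [h1]
        _ ≤ A₀.rank := Matrix.rank_mul_le_right _ _
  · intro k
    by_cases hk : (k : ℕ) < d
    · refine ⟨⟨k, hk⟩, ?_, ?_⟩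
      · funext j
        obtain ⟨j, hj⟩ := j
        simp only [Matrix.mulVec, dotProduct, Matrix.transpose_apply,
          Matrix.submatrix_apply, id, hA₀, ht, hk, if_true, Pi.zero_apply]
        apply Finset.sum_eq_zero
        intro r _
        rcases eq_or_ne r k with rfl | hr
        · have hne : (r : ℕ) ≠ (j : ℕ) := fun h => hj (Fin.ext h.symm)
          simp [hne]
        · simp [hr]
      · simp only [dotProduct, hA₀, ht, hk, if_true]
        rw [Finset.sum_eq_single k]
        · simp
        · intro r _ hr; simp [hr]
        · simp
    · refine ⟨⟨0, hd⟩, ?_, ?_⟩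
      · funext j
        obtain ⟨j, hj⟩ := j
        simp only [Matrix.mulVec, dotProduct, Matrix.transpose_apply,
          Matrix.submatrix_apply, id, hA₀, ht, hk, if_false, Pi.zero_apply]
        apply Finset.sum_eq_zero
        intro r _
        have hj0 : (j : ℕ) ≠ 0 := fun h => hj (Fin.ext h)
        rcases eq_or_ne ((r : ℕ)) ((j : ℕ)) with hr | hr
        · have h1 : (r : ℕ) ≠ 0 := hr ▸ hj0
          have h2 : r ≠ k := by
            intro h; subst h
            exact hk (hr ▸ j.isLt)
          simp [h1, h2, hr, hj0]
        · simp [hr]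
      · simp only [dotProduct, hA₀, ht, hk, if_false, ne_eq]
        rw [Finset.sum_eq_single ⟨0, lt_of_lt_of_le hd hpd⟩]
        · simp
        · intro r _ hr
          have : (r : ℕ) ≠ 0 := by
            intro h; exact hr (Fin.ext h)
          simp [this]
        · simp
  · have hdet : (Matrix.of fun k r : Fin p => (t k r) ^ 2).det = 1 := by
      rw [Matrix.det_of_lowerTriangular]
      · apply Finset.prod_eq_one
        intro k _
        by_cases hk : (k : ℕ) < d <;> simp [ht, hk]
      · intro i j hij
        have hij' : i < j := hij
        have hn : (i : ℕ) < (j : ℕ) := hij'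
        have h0 : (j : ℕ) ≠ 0 := by omega
        have hne' : (j : ℕ) ≠ (i : ℕ) := by omega
        have hne : j ≠ i := fun h => hne' (by rw [h])
        by_cases hk : (i : ℕ) < d <;>
          simp [ht, hk, hne, h0, hne', Fin.ext_iff]
    have : IsUnit (Matrix.of fun k r : Fin p => (t k r) ^ 2) := by
      rw [Matrix.isUnit_iff_isUnit_det, hdet]; exact isUnit_one
    rw [Matrix.rank_of_isUnit _ this, Fintype.card_fin]
end

section
/- Let f₁, f₂ : ℝᵈ × ℝᵖ → (0, ∞) be measurable strictly positive joint probability densities (with respect to Lebesgue measure), fix y ∈ ℝᵖ, and suppose the marginals gⱼ(y) = ∫_{ℝᵈ} fⱼ(x, y) dx are finite and positive for j = 1, 2. Let h₁(x) = f₁(x, y) / g₁(y) be the conditional density of x given y under f₁. If the expected complete-data log-likelihood does not decrease, i.e., ∫ h₁(x) log f₂(x, y) dx ≥ ∫ h₁(x) log f₁(x, y) dx (both integrals assumed finite), then the observed-data log-likelihood does not decrease: log g₂(y) ≥ log g₁(y). (Monotonicity of the EM update.) -/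
open MeasureTheory

/-- **Monotonicity of the EM update.** Let `f₁, f₂` be strictly positive
measurable joint probability densities on `ℝᵈ × ℝᵖ`, fix `y`, and suppose the marginals
`gⱼ(y) = ∫ fⱼ(x, y) dx` are finite and positive. If the expected complete-data
log-likelihood under the conditional density `h₁(x) = f₁(x,y)/g₁(y)` does not decrease,
then neither does the observed-data log-likelihood: `log g₂(y) ≥ log g₁(y)`. -/
theorem em_update_monotone {d p : ℕ}
    (f₁ f₂ : (Fin d → ℝ) × (Fin p → ℝ) → ℝ)
    (hf₁meas : Measurable f₁) (hf₂meas : Measurable f₂)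
    (hf₁pos : ∀ z, 0 < f₁ z) (hf₂pos : ∀ z, 0 < f₂ z)
    (hf₁dens : ∫ z, f₁ z = 1) (hf₂dens : ∫ z, f₂ z = 1)
    (y : Fin p → ℝ)
    (hg₁int : Integrable fun x => f₁ (x, y))
    (hg₂int : Integrable fun x => f₂ (x, y))
    (hg₁pos : 0 < ∫ x, f₁ (x, y))
    (hg₂pos : 0 < ∫ x, f₂ (x, y))
    (hint₂ : Integrable fun x =>
      f₁ (x, y) / (∫ x', f₁ (x', y)) * Real.log (f₂ (x, y)))
    (hint₁ : Integrable fun x =>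
      f₁ (x, y) / (∫ x', f₁ (x', y)) * Real.log (f₁ (x, y)))
    (hQ : ∫ x, f₁ (x, y) / (∫ x', f₁ (x', y)) * Real.log (f₂ (x, y)) ≥
          ∫ x, f₁ (x, y) / (∫ x', f₁ (x', y)) * Real.log (f₁ (x, y))) :
    Real.log (∫ x, f₂ (x, y)) ≥ Real.log (∫ x, f₁ (x, y)) := by

  set g₁ := ∫ x, f₁ (x, y) with hg₁def
  set g₂ := ∫ x, f₂ (x, y) with hg₂def
  have hh₁ : ∫ x, f₁ (x, y) / g₁ = 1 := by
    rw [integral_div, ← hg₁def]; field_simp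
  have hh₂ : ∫ x, f₂ (x, y) / g₂ = 1 := by
    rw [integral_div, ← hg₂def]; field_simp
  -- pointwise key inequality
  have key : ∀ x, f₁ (x, y) / g₁ * Real.log (f₂ (x, y))
      - f₁ (x, y) / g₁ * Real.log (f₁ (x, y))
      + (Real.log g₁ - Real.log g₂) * (f₁ (x, y) / g₁)
      ≤ f₂ (x, y) / g₂ - f₁ (x, y) / g₁ := by
    intro x
    have h1 := hf₁pos (x, y)
    have h2 := hf₂pos (x, y)
    have hpos : 0 < f₂ (x, y) * g₁ / (f₁ (x, y) * g₂) := by positivity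
    have hlog := Real.log_le_sub_one_of_pos hpos
    have hlogeq : Real.log (f₂ (x, y) * g₁ / (f₁ (x, y) * g₂))
        = Real.log (f₂ (x, y)) - Real.log (f₁ (x, y)) + (Real.log g₁ - Real.log g₂) := by
      rw [Real.log_div (by positivity) (by positivity),
        Real.log_mul h2.ne' hg₁pos.ne', Real.log_mul h1.ne' hg₂pos.ne']
      ring
    rw [hlogeq] at hlog
    have hm := mul_le_mul_of_nonneg_left hlog (by positivity : (0:ℝ) ≤ f₁ (x, y) / g₁)
    have hrw : f₁ (x, y) / g₁ * (f₂ (x, y) * g₁ / (f₁ (x, y) * g₂) - 1)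
        = f₂ (x, y) / g₂ - f₁ (x, y) / g₁ := by
      field_simp
    rw [hrw] at hm
    nlinarith [hm]
  have iA : Integrable (fun x => f₁ (x, y) / g₁ * Real.log (f₂ (x, y))
      - f₁ (x, y) / g₁ * Real.log (f₁ (x, y))) := hint₂.sub hint₁
  have iC : Integrable (fun x => (Real.log g₁ - Real.log g₂) * (f₁ (x, y) / g₁)) :=
    (hg₁int.div_const g₁).const_mul _
  have ilhs : Integrable (fun x => f₁ (x, y) / g₁ * Real.log (f₂ (x, y))
      - f₁ (x, y) / g₁ * Real.log (f₁ (x, y))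
      + (Real.log g₁ - Real.log g₂) * (f₁ (x, y) / g₁)) := iA.add iC
  have i₂ : Integrable (fun x => f₂ (x, y) / g₂) := hg₂int.div_const g₂
  have i₁ : Integrable (fun x => f₁ (x, y) / g₁) := hg₁int.div_const g₁
  have irhs : Integrable (fun x => f₂ (x, y) / g₂ - f₁ (x, y) / g₁) := i₂.sub i₁
  have hineq := integral_mono ilhs irhs key
  rw [integral_sub i₂ i₁, hh₂, hh₁] at hineq
  rw [integral_add iA iC, integral_sub hint₂ hint₁, integral_const_mul _ _, hh₁] at hineq
  have hQ' : (∫ x, f₁ (x, y) / g₁ * Real.log (f₂ (x, y)))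
      ≥ ∫ x, f₁ (x, y) / g₁ * Real.log (f₁ (x, y)) := hQ
  linarith [hineq, hQ']
end
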